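/- For density matrices ρ, σ, the trace distance T(ρ,σ) and fidelity F(ρ,σ) satisfy 1 − √F(ρ,σ) ≤ T(ρ,σ) ≤ √(1 − F(ρ,σ)). -/

import Mathlib

namespace Matrix.PosSemidef

open scoped ComplexOrder

/-- The positive semidefinite square root of a positive semidefinite matrix
(the definition of Mathlib of December 2024, since removed). -/
noncomputable def sqrt {n : Type*} [Fintype n] [DecidableEq n] {𝕜 : Type*} [RCLike 𝕜]
    {A : Matrix n n 𝕜} (hA : A.PosSemidef) : Matrix n n 𝕜 :=
  hA.1.eigenvectorUnitary.1 * Matrix.diagonal ((↑) ∘ (√·) ∘ hA.1.eigenvalues) *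
  (star hA.1.eigenvectorUnitary : Matrix n n 𝕜)

end Matrix.PosSemidef

/-!
Lower bound: the polar decomposition `√σ √ρ = V |√σ √ρ|` with `‖V‖ ≤ 1` gives
`Re Tr (√σ √ρ) ≤ Tr |√σ √ρ| = √F`, so `1 - √F ≤ ½ Tr (√ρ - √σ)²`, which is at most
`½ Tr |ρ - σ| = T` by the Powers–Størmer inequality.

Upper bound: measuring in an eigenbasis `(bᵢ)` of `ρ - σ` gives probability vectors
`xᵢ² = ‖√ρ bᵢ‖²`, `yᵢ² = ‖√σ bᵢ‖²` with `T = ½ ∑ |xᵢ² - yᵢ²|`, and the polar decomposition gives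
`√F ≤ ∑ xᵢ yᵢ`. Cauchy–Schwarz applied to `|xᵢ² - yᵢ²| = |xᵢ - yᵢ| |xᵢ + yᵢ|` gives
`T² ≤ 1 - (∑ xᵢ yᵢ)²`.
-/

lemma Finset.sq_sum_abs_sq_sub_sq_le {ι : Type*} (s : Finset ι) (x y : ι → ℝ)
    (hx : ∑ i ∈ s, x i ^ 2 = 1) (hy : ∑ i ∈ s, y i ^ 2 = 1) :
    (∑ i ∈ s, |x i ^ 2 - y i ^ 2|) ^ 2 ≤ 4 * (1 - (∑ i ∈ s, x i * y i) ^ 2) := by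
  have hsub : ∑ i ∈ s, |x i - y i| ^ 2 = 2 - 2 * ∑ i ∈ s, x i * y i := by
    simp only [sq_abs, sub_sq, Finset.sum_add_distrib, Finset.sum_sub_distrib, ← Finset.mul_sum,
      mul_assoc, hx, hy]
    ring
  have hadd : ∑ i ∈ s, |x i + y i| ^ 2 = 2 + 2 * ∑ i ∈ s, x i * y i := by
    simp only [sq_abs, add_sq, Finset.sum_add_distrib, ← Finset.mul_sum, mul_assoc, hx, hy]
    ring
  have hfactor : ∀ i ∈ s, |x i ^ 2 - y i ^ 2| = |x i - y i| * |x i + y i| := fun i _ => by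
    rw [← abs_mul]
    ring_nf
  rw [Finset.sum_congr rfl hfactor]
  calc _ ≤ (∑ i ∈ s, |x i - y i| ^ 2) * ∑ i ∈ s, |x i + y i| ^ 2 :=
        Finset.sum_mul_sq_le_sq_mul_sq _ _ _
    _ = _ := by rw [hsub, hadd]; ring

namespace Matrix

open scoped MatrixOrder Matrix.Norms.L2Operator InnerProductSpace ComplexOrder

variable {n : Type*} [Fintype n] [DecidableEq n]

section RCLike

variable {𝕜 : Type*} [RCLike 𝕜]

lemma PosSemidef.sqrt_eq_cfcSqrt {A : Matrix n n 𝕜} (hA : A.PosSemidef) :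
    hA.sqrt = CFC.sqrt A := by
  rw [CFC.sqrt_eq_real_sqrt A hA.nonneg, cfcₙ_eq_cfc, hA.1.cfc_eq]
  rfl

/-- Every function is continuous on the finite spectrum of a matrix, so no continuity
side conditions are needed. -/
lemma cfc_mul_cfc (f g : ℝ → ℝ) (A : Matrix n n 𝕜) :
    cfc f A * cfc g A = cfc (fun x => f x * g x) A :=
  (cfc_mul f g A (finite_real_spectrum.continuousOn f) (finite_real_spectrum.continuousOn g)).symm

lemma cfc_mul_self {A : Matrix n n 𝕜} (hA : IsSelfAdjoint A) (f : ℝ → ℝ) :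
    cfc f A * A = cfc (fun x => f x * x) A := by
  rw [← cfc_mul_cfc f (fun x => x), cfc_id' ℝ A hA]

lemma self_mul_cfc {A : Matrix n n 𝕜} (hA : IsSelfAdjoint A) (f : ℝ → ℝ) :
    A * cfc f A = cfc (fun x => x * f x) A := by
  rw [← cfc_mul_cfc (fun x => x) f, cfc_id' ℝ A hA]

lemma re_trace_mul_nonneg {P Q : Matrix n n 𝕜} (hP : 0 ≤ P) (hQ : 0 ≤ Q) :
    0 ≤ RCLike.re (P * Q).trace := by
  set R := CFC.sqrt P
  have hR : Rᴴ = R := (CFC.sqrt_nonneg P).isSelfAdjoint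
  have hRQR := (nonneg_iff_posSemidef.mp hQ).mul_mul_conjTranspose_same R
  rw [hR] at hRQR
  rw [← CFC.sqrt_mul_sqrt_self P, mul_assoc, trace_mul_comm]
  exact (RCLike.nonneg_iff.mp hRQR.trace_nonneg).1

lemma trace_eq_sum_inner {ι : Type*} [Fintype ι] (X : Matrix n n 𝕜)
    (b : OrthonormalBasis ι 𝕜 (EuclideanSpace 𝕜 n)) :
    X.trace = ∑ i, ⟪b i, toEuclideanLin X (b i)⟫_𝕜 := by
  rw [← LinearMap.trace_eq_sum_inner,
    LinearMap.trace_eq_matrix_trace 𝕜 (EuclideanSpace.basisFun n 𝕜).toBasis]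
  congr
  ext i j
  simp [LinearMap.toMatrix_apply]

lemma inner_toEuclideanLin_conjTranspose (X : Matrix n n 𝕜) (v w : EuclideanSpace 𝕜 n) :
    ⟪toEuclideanLin Xᴴ v, w⟫_𝕜 = ⟪v, toEuclideanLin X w⟫_𝕜 := by
  rw [toEuclideanLin_conjTranspose_eq_adjoint, LinearMap.adjoint_inner_left]

lemma re_inner_toEuclideanLin_conjTranspose_mul_self (R : Matrix n n 𝕜)
    (v : EuclideanSpace 𝕜 n) :
    RCLike.re ⟪v, toEuclideanLin (Rᴴ * R) v⟫_𝕜 = ‖toEuclideanLin R v‖ ^ 2 := by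
  rw [toLpLin_mul (q := 2), LinearMap.comp_apply, ← inner_toEuclideanLin_conjTranspose,
    conjTranspose_conjTranspose, inner_self_eq_norm_sq]

lemma norm_toEuclideanLin_le_of_norm_le_one {W : Matrix n n 𝕜} (hW : ‖W‖ ≤ 1)
    (v : EuclideanSpace 𝕜 n) : ‖toEuclideanLin W v‖ ≤ ‖v‖ :=
  (l2_opNorm_mulVec W v).trans (mul_le_of_le_one_left (norm_nonneg v) hW)

lemma IsHermitian.toEuclideanLin_eigenvectorBasis {M : Matrix n n 𝕜} (hM : M.IsHermitian)
    (i : n) :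
    toEuclideanLin M (hM.eigenvectorBasis i) = (hM.eigenvalues i : 𝕜) • hM.eigenvectorBasis i := by
  rw [toLpLin_apply, hM.mulVec_eigenvectorBasis, RCLike.real_smul_eq_coe_smul (K := 𝕜)]
  rfl

lemma IsHermitian.inner_toEuclideanLin_eigenvectorBasis {M : Matrix n n 𝕜} (hM : M.IsHermitian)
    (i : n) :
    ⟪hM.eigenvectorBasis i, toEuclideanLin M (hM.eigenvectorBasis i)⟫_𝕜 = hM.eigenvalues i := by
  rw [hM.toEuclideanLin_eigenvectorBasis, inner_smul_right, inner_self_eq_norm_sq_to_K,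
    hM.eigenvectorBasis.orthonormal.1 i]
  simp

lemma IsHermitian.re_trace_mul_le_sum_abs_eigenvalues {C M : Matrix n n 𝕜} (hM : M.IsHermitian)
    (hC : ‖C‖ ≤ 1) : RCLike.re (C * M).trace ≤ ∑ i, |hM.eigenvalues i| := by
  rw [trace_eq_sum_inner _ hM.eigenvectorBasis, map_sum]
  gcongr with i
  set b := hM.eigenvectorBasis
  have hb : ‖b i‖ = 1 := b.orthonormal.1 i
  calc RCLike.re ⟪b i, toEuclideanLin (C * M) (b i)⟫_𝕜
      = hM.eigenvalues i * RCLike.re ⟪b i, toEuclideanLin C (b i)⟫_𝕜 := by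
        rw [toLpLin_mul (q := 2), LinearMap.comp_apply, hM.toEuclideanLin_eigenvectorBasis,
          map_smul, inner_smul_right, RCLike.re_ofReal_mul]
    _ ≤ |hM.eigenvalues i| * ‖⟪b i, toEuclideanLin C (b i)⟫_𝕜‖ :=
        (le_abs_self _).trans_eq (abs_mul _ _) |>.trans (by gcongr; exact RCLike.abs_re_le_norm _)
    _ ≤ |hM.eigenvalues i| * (‖b i‖ * ‖b i‖) := by
        gcongr
        exact (norm_inner_le_norm _ _).trans
          (mul_le_mul_of_nonneg_left (norm_toEuclideanLin_le_of_norm_le_one hC _) (norm_nonneg _))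
    _ = |hM.eigenvalues i| := by rw [hb, mul_one, mul_one]

lemma re_trace_mul_le_re_trace {C N : Matrix n n 𝕜} (hN : 0 ≤ N) (hC : ‖C‖ ≤ 1) :
    RCLike.re (C * N).trace ≤ RCLike.re N.trace := by
  have hN' := nonneg_iff_posSemidef.mp hN
  calc _ ≤ ∑ i, |hN'.1.eigenvalues i| := hN'.1.re_trace_mul_le_sum_abs_eigenvalues hC
    _ = RCLike.re N.trace := by
      simp [hN'.1.trace_eq_sum_eigenvalues, abs_of_nonneg (hN'.eigenvalues_nonneg _)]

lemma re_trace_conjTranspose_mul_mul_le {ι : Type*} [Fintype ι] (A B : Matrix n n 𝕜)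
    {W : Matrix n n 𝕜} (hW : ‖W‖ ≤ 1) (b : OrthonormalBasis ι 𝕜 (EuclideanSpace 𝕜 n)) :
    RCLike.re (Aᴴ * W * B).trace ≤
      ∑ i, ‖toEuclideanLin A (b i)‖ * ‖toEuclideanLin B (b i)‖ := by
  rw [trace_eq_sum_inner _ b, map_sum]
  gcongr with i
  calc RCLike.re ⟪b i, toEuclideanLin (Aᴴ * W * B) (b i)⟫_𝕜
      = RCLike.re ⟪toEuclideanLin A (b i), toEuclideanLin W (toEuclideanLin B (b i))⟫_𝕜 := by
        rw [mul_assoc, toLpLin_mul (q := 2), LinearMap.comp_apply,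
          ← inner_toEuclideanLin_conjTranspose, conjTranspose_conjTranspose, toLpLin_mul (q := 2),
          LinearMap.comp_apply]
    _ ≤ ‖toEuclideanLin A (b i)‖ * ‖toEuclideanLin W (toEuclideanLin B (b i))‖ :=
        (RCLike.re_le_norm _).trans (norm_inner_le_norm _ _)
    _ ≤ ‖toEuclideanLin A (b i)‖ * ‖toEuclideanLin B (b i)‖ := by
        gcongr
        exact norm_toEuclideanLin_le_of_norm_le_one hW _

end RCLike

/-- `V = X |X|⁻¹`, where `|X|⁻¹ = cfc (·⁻¹) |X|` is the pseudo-inverse (as `(0 : ℝ)⁻¹ = 0`), and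
`Vᴴ V` is the support projection of `|X|`. -/
lemma exists_polar_decomposition (X : Matrix n n ℂ) :
    ∃ V : Matrix n n ℂ, ‖V‖ ≤ 1 ∧ V * CFC.abs X = X ∧ Vᴴ * X = CFC.abs X := by
  set N := CFC.abs X
  have hN : IsSelfAdjoint N := (CFC.abs_nonneg X).isSelfAdjoint
  have hNN : N * N = Xᴴ * X := CFC.abs_mul_abs X
  set N' := cfc (·⁻¹ : ℝ → ℝ) N
  set P := cfc (fun x : ℝ => x⁻¹ * x) N
  have hN'H : N'ᴴ = N' := (cfc_predicate (p := IsSelfAdjoint) _ N).star_eq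
  have hN'N : N' * N = P := cfc_mul_self hN _
  have hN'NN : N' * (N * N) = N := by
    rw [← mul_assoc, hN'N, cfc_mul_self hN]
    exact (cfc_congr fun x _ => inv_mul_mul_self x).trans (cfc_id' ℝ N hN)
  refine ⟨X * N', ?_, ?_, ?_⟩
  · have hP : ‖P‖ ≤ 1 := norm_cfc_le (𝕜 := ℝ) zero_le_one fun x _ => by
      rcases eq_or_ne x 0 with rfl | hx <;> simp [*]
    have hVV : (X * N')ᴴ * (X * N') = P := by
      rw [conjTranspose_mul, hN'H, mul_assoc, ← mul_assoc Xᴴ, ← hNN, ← mul_assoc, hN'NN,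
        self_mul_cfc hN]
      exact cfc_congr fun x _ => mul_comm _ _
    have hV := CStarRing.norm_star_mul_self (x := X * N')
    rw [star_eq_conjTranspose, hVV] at hV
    nlinarith [norm_nonneg (X * N')]
  · have hNP : N * (P - 1) = 0 := by
      rw [mul_sub, mul_one, self_mul_cfc hN, sub_eq_zero]
      exact (cfc_congr fun x _ => by rw [← mul_assoc, mul_inv_mul_cancel]).trans (cfc_id' ℝ N hN)
    have hXP : X * (P - 1) = 0 := by
      refine CStarRing.star_mul_self_eq_zero_iff _ |>.mp ?_
      rw [star_eq_conjTranspose, conjTranspose_mul, mul_assoc, ← mul_assoc Xᴴ, ← hNN,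
        mul_assoc N, hNP, mul_zero, mul_zero]
    rw [mul_assoc, hN'N, ← sub_eq_zero, ← mul_sub_one, hXP]
  · rw [conjTranspose_mul, hN'H, mul_assoc, ← hNN, hN'NN]

/-- The Powers–Størmer inequality. With `H = A - B` and `S = sign H`, one has
`Tr H² ≤ Tr |H| (A + B) = Tr S (A² - B²)`, because `H (A + B) + (A + B) H = 2 (A² - B²)`. -/
theorem re_trace_sub_mul_sub_le_sum_abs_eigenvalues {A B M : Matrix n n ℂ} (hA : 0 ≤ A)
    (hB : 0 ≤ B) (hM : M.IsHermitian) (hAB : A * A - B * B = M) :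
    ((A - B) * (A - B)).trace.re ≤ ∑ i, |hM.eigenvalues i| := by
  set H := A - B
  have hH : IsSelfAdjoint H := hA.isSelfAdjoint.sub hB.isSelfAdjoint
  set S := cfc (fun x : ℝ => (SignType.sign x : ℝ)) H
  set absH := cfc (fun x : ℝ => |x|) H
  have hSH : S * H = absH := (cfc_mul_self hH _).trans (cfc_congr fun x _ => sign_mul_self x)
  have hHS : H * S = absH := (self_mul_cfc hH _).trans (cfc_congr fun x _ => self_mul_sign x)
  have hS : ‖S‖ ≤ 1 := norm_cfc_le (𝕜 := ℝ) zero_le_one fun x _ => by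
    rcases lt_trichotomy x 0 with hx | rfl | hx <;> simp [*]
  have habs_sub : 0 ≤ absH - H := by
    rw [← cfc_id' ℝ H hH, ← cfc_sub (f := fun x : ℝ => |x|) (g := fun x : ℝ => x)]
    exact cfc_nonneg fun x _ => sub_nonneg.mpr (le_abs_self x)
  have habs_add : 0 ≤ absH + H := by
    rw [← cfc_id' ℝ H hH, ← cfc_add (f := fun x : ℝ => |x|) (g := fun x : ℝ => x)]
    exact cfc_nonneg fun x _ => by linarith [neg_abs_le x]
  have hkey : H * (A + B) + (A + B) * H = M + M := by
    simp only [H, ← hAB]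
    noncomm_ring
  have htrace : (H * H).trace + ((absH - H) * A).trace + ((absH + H) * B).trace
      = (S * M).trace := by
    have h : (absH * (A + B)).trace + (absH * (A + B)).trace
        = (S * M).trace + (S * M).trace := by
      calc _ = (S * (H * (A + B))).trace + (S * ((A + B) * H)).trace := by
            rw [← mul_assoc, hSH, trace_mul_comm S, mul_assoc, hHS, trace_mul_comm]
        _ = _ := by rw [← trace_add, ← mul_add, hkey, mul_add, trace_add]
    simp only [H, sub_mul, add_mul, mul_sub, mul_add, trace_sub, trace_add] at h ⊢
    linear_combination h / 2
  have hA' := re_trace_mul_nonneg habs_sub hA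
  have hB' := re_trace_mul_nonneg habs_add hB
  have hSM := hM.re_trace_mul_le_sum_abs_eigenvalues hS
  have hre := congrArg Complex.re htrace
  simp only [Complex.add_re] at hre
  simp only [RCLike.re_to_complex] at hA' hB' hSM
  linarith

lemma PosSemidef.sqrt_sqrt_mul_mul_sqrt {ρ σ : Matrix n n ℂ} (hρ : ρ.PosSemidef) (hσ : 0 ≤ σ)
    (hin : (hρ.sqrt * σ * hρ.sqrt).PosSemidef) :
    hin.sqrt = CFC.abs (CFC.sqrt σ * CFC.sqrt ρ) := by
  rw [hin.sqrt_eq_cfcSqrt, hρ.sqrt_eq_cfcSqrt, CFC.abs, star_mul,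
    (CFC.sqrt_nonneg ρ).isSelfAdjoint.star_eq, (CFC.sqrt_nonneg σ).isSelfAdjoint.star_eq]
  conv_lhs => rw [← CFC.sqrt_mul_sqrt_self σ]
  simp only [mul_assoc]

variable {ρ σ : Matrix n n ℂ}

theorem one_sub_re_trace_cfcAbs_le (hρ : 0 ≤ ρ) (hσ : 0 ≤ σ) (hρ1 : ρ.trace = 1)
    (hσ1 : σ.trace = 1) (hM : (ρ - σ).IsHermitian) :
    1 - (CFC.abs (CFC.sqrt σ * CFC.sqrt ρ)).trace.re ≤ 1 / 2 * ∑ i, |hM.eigenvalues i| := by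
  set A := CFC.sqrt ρ
  set B := CFC.sqrt σ
  have hAA : A * A = ρ := CFC.sqrt_mul_sqrt_self ρ
  have hBB : B * B = σ := CFC.sqrt_mul_sqrt_self σ
  obtain ⟨V, hV, hVN, -⟩ := exists_polar_decomposition (B * A)
  have hBA : (B * A).trace.re ≤ (CFC.abs (B * A)).trace.re := by
    conv_lhs => rw [← hVN]
    exact re_trace_mul_le_re_trace (CFC.abs_nonneg _) hV
  have hsq : ((A - B) * (A - B)).trace.re = 2 - 2 * (B * A).trace.re := by
    rw [sub_mul, mul_sub, mul_sub, hAA, hBB, trace_sub, trace_sub, trace_sub, hρ1, hσ1,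
      trace_mul_comm A B]
    simp only [Complex.sub_re, Complex.one_re]
    ring
  have hPS := re_trace_sub_mul_sub_le_sum_abs_eigenvalues (CFC.sqrt_nonneg ρ) (CFC.sqrt_nonneg σ)
    hM (by rw [hAA, hBB])
  linarith

theorem sq_half_sum_abs_eigenvalues_le (hρ : 0 ≤ ρ) (hσ : 0 ≤ σ) (hρ1 : ρ.trace = 1)
    (hσ1 : σ.trace = 1) (hM : (ρ - σ).IsHermitian) :
    (1 / 2 * ∑ i, |hM.eigenvalues i|) ^ 2 ≤
      1 - (CFC.abs (CFC.sqrt σ * CFC.sqrt ρ)).trace.re ^ 2 := by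
  set A := CFC.sqrt ρ
  set B := CFC.sqrt σ
  set b := hM.eigenvectorBasis
  set x := fun i => ‖toEuclideanLin A (b i)‖
  set y := fun i => ‖toEuclideanLin B (b i)‖
  have hA : Aᴴ = A := (CFC.sqrt_nonneg ρ).isSelfAdjoint
  have hB : Bᴴ = B := (CFC.sqrt_nonneg σ).isSelfAdjoint
  have hx : ∀ i, x i ^ 2 = RCLike.re ⟪b i, toEuclideanLin ρ (b i)⟫_ℂ := fun i => by
    rw [← CFC.sqrt_mul_sqrt_self ρ, ← re_inner_toEuclideanLin_conjTranspose_mul_self, hA]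
  have hy : ∀ i, y i ^ 2 = RCLike.re ⟪b i, toEuclideanLin σ (b i)⟫_ℂ := fun i => by
    rw [← CFC.sqrt_mul_sqrt_self σ, ← re_inner_toEuclideanLin_conjTranspose_mul_self, hB]
  have hsum_x : ∑ i, x i ^ 2 = 1 := by
    simp only [hx]
    rw [← map_sum, ← trace_eq_sum_inner, hρ1, RCLike.one_re]
  have hsum_y : ∑ i, y i ^ 2 = 1 := by
    simp only [hy]
    rw [← map_sum, ← trace_eq_sum_inner, hσ1, RCLike.one_re]
  have hdiff : ∀ i, x i ^ 2 - y i ^ 2 = hM.eigenvalues i := fun i => by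
    rw [hx, hy, ← map_sub, ← inner_sub_right, ← LinearMap.sub_apply, ← map_sub,
      hM.inner_toEuclideanLin_eigenvectorBasis, RCLike.ofReal_re]
  have hF : (CFC.abs (B * A)).trace.re ≤ ∑ i, x i * y i := by
    obtain ⟨V, hV, -, hVX⟩ := exists_polar_decomposition (B * A)
    rw [← hVX, ← mul_assoc, trace_mul_comm, ← mul_assoc]
    nth_rw 1 [← hA]
    exact re_trace_conjTranspose_mul_mul_le A B (by rwa [l2_opNorm_conjTranspose]) b
  have hF0 : 0 ≤ (CFC.abs (B * A)).trace.re :=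
    (Complex.nonneg_iff.mp (nonneg_iff_posSemidef.mp (CFC.abs_nonneg _)).trace_nonneg).1
  have hCS := Finset.univ.sq_sum_abs_sq_sub_sq_le x y hsum_x hsum_y
  simp only [hdiff] at hCS
  have := pow_le_pow_left₀ hF0 hF 2
  linarith

end Matrix

open ComplexOrder in
/-- Fuchs–van de Graaf: for density matrices `ρ, σ`, the trace distance
`T(ρ,σ) = (1/2) Tr|ρ-σ|` (half the sum of the absolute values of the eigenvalues of
`ρ - σ`) and the fidelity `F(ρ,σ) = (Tr √(√ρ σ √ρ))²` satisfy
`1 - √F ≤ T ≤ √(1 - F)`. -/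
theorem fuchs_van_de_graaf {d : ℕ}
    (ρ σ : Matrix (Fin d) (Fin d) ℂ)
    (hρ : ρ.PosSemidef) (hσ : σ.PosSemidef)
    (hρ1 : ρ.trace = 1) (hσ1 : σ.trace = 1)
    (hin : (hρ.sqrt * σ * hρ.sqrt).PosSemidef) :
    1 - Real.sqrt ((hin.sqrt.trace.re) ^ 2) ≤
      (1 / 2) * ∑ i, |(hρ.1.sub hσ.1).eigenvalues i| ∧
    (1 / 2) * ∑ i, |(hρ.1.sub hσ.1).eigenvalues i| ≤
      Real.sqrt (1 - (hin.sqrt.trace.re) ^ 2) := by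
  rw [hρ.sqrt_sqrt_mul_mul_sqrt hσ.nonneg hin, Real.sqrt_sq_eq_abs]
  exact ⟨(sub_le_sub_left (le_abs_self _) 1).trans
      (Matrix.one_sub_re_trace_cfcAbs_le hρ.nonneg hσ.nonneg hρ1 hσ1 _),
    (le_abs_self _).trans
      (Real.abs_le_sqrt (Matrix.sq_half_sum_abs_eigenvalues_le hρ.nonneg hσ.nonneg hρ1 hσ1 _))⟩
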